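/- Let G be a finite connected graph with absorbing vertex a, and for a vertex x ≠ a let S_x(v) denote the expected number of visits to x of a simple random walk started at v before absorption at a. Then S_x(v) ≤ deg(x)·d(x,a) for every vertex v. -/

import Mathlib

/-!
`S` is harmonic off `{x, a}` and vanishes at `a`, so by the maximum principle every value of `S`
is at most `max (S x) 0`. By Green's identity the Dirichlet energy of `S` is `deg x * S x`.
Telescoping `S` along a shortest path from `x` to `a` and applying Cauchy–Schwarz gives
`(S x) ^ 2 ≤ d(x, a) * deg x * S x`, hence `S x ≤ deg x * d(x, a)`.
-/

/-- `IsVisits G a x S` : `S v` satisfies the linear system characterizing the expected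
number of visits to `x` (before absorption at `a`) of the simple random walk on `G`
started at `v`:  `S a = 0` and, for `v ≠ a`,
`S v = [v = x] + (1/deg v) ∑_{u ~ v} S u` (multiplied through by `deg v`). -/
def IsVisits {V : Type*} [Fintype V] [DecidableEq V] (G : SimpleGraph V) [DecidableRel G.Adj]
    (a x : V) (S : V → ℝ) : Prop :=
  S a = 0 ∧ ∀ v, v ≠ a →
    (G.degree v : ℝ) * S v =
      (if v = x then (G.degree v : ℝ) else 0) + ∑ u ∈ G.neighborFinset v, S u

open Finset Matrix

namespace SimpleGraph

variable {V : Type*} {G : SimpleGraph V}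

theorem Walk.sum_darts_sub {u v : V} (p : G.Walk u v) (f : V → ℝ) :
    (p.darts.map fun d => f d.fst - f d.snd).sum = f u - f v := by
  induction p with
  | nil => simp
  | cons _ q ih => rw [Walk.darts_cons, List.map_cons, List.sum_cons, ih]; ring

theorem Walk.IsTrail.symm_notMem_darts {u v : V} {p : G.Walk u v} (hp : p.IsTrail)
    {d : G.Dart} (hd : d ∈ p.darts) : d.symm ∉ p.darts := fun hsymm =>
  d.symm_ne <| List.inj_on_of_nodup_map hp.edges_nodup hsymm hd d.edge_symm

variable [Fintype V] [DecidableRel G.Adj]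

theorem sum_darts_eq_sum_sum_adj (g : V → V → ℝ) :
    ∑ d : G.Dart, g d.fst d.snd = ∑ i, ∑ j, if G.Adj i j then g i j else 0 := by
  let e : G.Dart ≃ {q : V × V // G.Adj q.1 q.2} :=
    { toFun := fun d => ⟨d.toProd, d.adj⟩
      invFun := fun q => ⟨q.1, q.2⟩ }
  rw [Fintype.sum_equiv e (fun d => g d.fst d.snd) (fun q => g q.1.1 q.1.2) fun _ => rfl,
    ← Finset.sum_subtype (univ.filter fun q : V × V => G.Adj q.1 q.2) (by simp)
      (fun q => g q.1 q.2), Finset.sum_filter, Fintype.sum_prod_type]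

/-- The sum of `(f u - f v) ^ 2` over the edges `uv`, each edge carrying two darts. -/
noncomputable def dirichletEnergy (G : SimpleGraph V) [DecidableRel G.Adj] (f : V → ℝ) : ℝ :=
  (∑ d : G.Dart, (f d.fst - f d.snd) ^ 2) / 2

theorem dirichletEnergy_eq_dotProduct_lapMatrix_mulVec [DecidableEq V] (f : V → ℝ) :
    G.dirichletEnergy f = f ⬝ᵥ (G.lapMatrix ℝ *ᵥ f) := by
  rw [dirichletEnergy, sum_darts_eq_sum_sum_adj (fun i j => (f i - f j) ^ 2),
    ← lapMatrix_toLinearMap₂', toLinearMap₂'_apply']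

theorem Walk.IsTrail.sum_darts_sq_le_dirichletEnergy [DecidableEq V] {u v : V}
    {p : G.Walk u v} (hp : p.IsTrail) (f : V → ℝ) :
    ∑ d ∈ p.darts.toFinset, (f d.fst - f d.snd) ^ 2 ≤ G.dirichletEnergy f := by
  set F := p.darts.toFinset
  have hdisj : Disjoint F (F.map ⟨Dart.symm, Dart.symm_involutive.injective⟩) := by
    simp only [F, Finset.disjoint_left, Finset.mem_map, List.mem_toFinset]
    rintro d hd ⟨d', hd', rfl⟩
    exact hp.symm_notMem_darts hd' hd
  have hsymm : ∑ d ∈ F, (f d.snd - f d.fst) ^ 2 = ∑ d ∈ F, (f d.fst - f d.snd) ^ 2 :=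
    Finset.sum_congr rfl fun _ _ => by ring
  have hle := Finset.sum_le_univ_sum_of_nonneg (s := F.disjUnion _ hdisj)
    (f := fun d : G.Dart => (f d.fst - f d.snd) ^ 2) fun _ => sq_nonneg _
  rw [Finset.sum_disjUnion, Finset.sum_map] at hle
  simp only [Function.Embedding.coeFn_mk, Dart.symm_toProd, Prod.fst_swap, Prod.snd_swap,
    hsymm] at hle
  rw [dirichletEnergy]
  linarith

theorem Walk.IsPath.sq_sub_le_length_mul_dirichletEnergy [DecidableEq V] {u v : V}
    {p : G.Walk u v} (hp : p.IsPath) (f : V → ℝ) :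
    (f u - f v) ^ 2 ≤ p.length * G.dirichletEnergy f := by
  have hnodup : p.darts.Nodup := p.darts_nodup_of_support_nodup hp.support_nodup
  calc (f u - f v) ^ 2 = (∑ d ∈ p.darts.toFinset, (f d.fst - f d.snd)) ^ 2 := by
        rw [List.sum_toFinset _ hnodup, p.sum_darts_sub]
    _ ≤ #p.darts.toFinset * ∑ d ∈ p.darts.toFinset, (f d.fst - f d.snd) ^ 2 :=
        sq_sum_le_card_mul_sum_sq
    _ ≤ p.length * G.dirichletEnergy f := by
        rw [List.toFinset_card_of_nodup hnodup, p.length_darts]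
        exact mul_le_mul_of_nonneg_left (hp.isTrail.sum_darts_sq_le_dirichletEnergy f)
          (Nat.cast_nonneg _)

end SimpleGraph

namespace IsVisits

open SimpleGraph

variable {V : Type*} [Fintype V] [DecidableEq V] {G : SimpleGraph V} [DecidableRel G.Adj]
  {a x : V} {S : V → ℝ}

theorem lapMatrix_mulVec_eq (hS : IsVisits G a x S) {v : V} (hva : v ≠ a) :
    (G.lapMatrix ℝ *ᵥ S) v = if v = x then (G.degree x : ℝ) else 0 := by
  rw [SimpleGraph.lapMatrix_mulVec_apply, hS.2 v hva]
  split_ifs with hvx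
  · rw [hvx]; ring
  · ring

theorem dirichletEnergy_eq (hS : IsVisits G a x S) (hxa : x ≠ a) :
    G.dirichletEnergy S = G.degree x * S x := by
  have hterm : ∀ v, S v * (G.lapMatrix ℝ *ᵥ S) v = if v = x then G.degree x * S x else 0 := by
    intro v
    rcases eq_or_ne v a with rfl | hva
    · rw [hS.1, zero_mul, if_neg hxa.symm]
    · rw [hS.lapMatrix_mulVec_eq hva]
      split_ifs with hvx
      · rw [hvx, mul_comm]
      · rw [mul_zero]
  rw [dirichletEnergy_eq_dotProduct_lapMatrix_mulVec, dotProduct,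
    Finset.sum_congr rfl fun v _ => hterm v, Finset.sum_ite_eq', if_pos (Finset.mem_univ x)]

theorem eq_of_adj_of_forall_le (hS : IsVisits G a x S) {w u : V} (hwa : w ≠ a) (hwx : w ≠ x)
    (hmax : ∀ u, S u ≤ S w) (hadj : G.Adj w u) : S u = S w := by
  have hharm : ∑ u ∈ G.neighborFinset w, (S w - S u) = 0 := by
    rw [Finset.sum_sub_distrib, Finset.sum_const, card_neighborFinset_eq_degree, nsmul_eq_mul,
      ← SimpleGraph.lapMatrix_mulVec_apply, hS.lapMatrix_mulVec_eq hwa, if_neg hwx]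
  have := (Finset.sum_eq_zero_iff_of_nonneg fun u _ => sub_nonneg.2 (hmax u)).1 hharm u
    ((G.mem_neighborFinset w u).2 hadj)
  linarith

theorem le_max_zero (hS : IsVisits G a x S) (hconn : G.Connected) (v : V) :
    S v ≤ max (S x) 0 := by
  obtain ⟨w, -, hw⟩ := Finset.exists_max_image Finset.univ S ⟨x, Finset.mem_univ x⟩
  suffices ∀ {w z : V}, G.Walk w z → z = a → (∀ u, S u ≤ S w) → S w ≤ max (S x) 0 from
    (hw v (Finset.mem_univ v)).trans
      (this (hconn.preconnected w a).some rfl fun u => hw u (Finset.mem_univ u))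
  intro w z p
  induction p with
  | nil => rintro rfl -; exact hS.1 ▸ le_max_right _ _
  | @cons w u z hadj _ ih =>
    intro hz hmax
    by_cases hwx : w = x
    · exact hwx ▸ le_max_left _ _
    by_cases hwa : w = a
    · exact hwa ▸ hS.1 ▸ le_max_right _ _
    have hu := hS.eq_of_adj_of_forall_le hwa hwx hmax hadj
    exact hu ▸ ih hz (hu ▸ hmax)

theorem apply_le_degree_mul_dist (hS : IsVisits G a x S) (hconn : G.Connected) (hxa : x ≠ a) :
    S x ≤ G.degree x * G.dist x a := by
  rcases le_or_gt (S x) 0 with hx | hx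
  · exact hx.trans (by positivity)
  obtain ⟨p, hp, hlen⟩ := hconn.exists_path_of_dist x a
  have hsq := hp.sq_sub_le_length_mul_dirichletEnergy S
  rw [hS.1, sub_zero, hS.dirichletEnergy_eq hxa, hlen] at hsq
  nlinarith

end IsVisits

theorem visits_le_degree_mul_dist {V : Type*} [Fintype V] [DecidableEq V]
    (G : SimpleGraph V) [DecidableRel G.Adj] (hconn : G.Connected)
    (a x : V) (hxa : x ≠ a)
    (S : V → ℝ) (hS : IsVisits G a x S) (v : V) :
    S v ≤ (G.degree x : ℝ) * (G.dist x a : ℝ) :=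
  (hS.le_max_zero hconn v).trans
    (max_le (hS.apply_le_degree_mul_dist hconn hxa) (by positivity))
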